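/- arXiv:2603.19648 — 6 statements merged into one kernel-verified Lean document; each statement's English description precedes it below -/
import Mathlib

section
/- Suppose β ≥ 2/μ and K_0 ≥ βL²/μ + βμ. Then for all k ≥ 0, E[‖x_k − x*‖²] ≤ (K_0‖x_0 − x*‖² + 2βσ²/μ)/(k + K_0). -/
/-!
With `β_k = β / (k + K₀)` and `W_k = x_k - x* - β_k F(x_k)`, which is `𝓕_k`-measurable, we have
`x_{k+1} - x* = W_k - β_k η_k`, and the martingale-difference property kills the cross term:
`E‖x_{k+1} - x*‖² = E‖W_k‖² + β_k² E‖η_k‖²`. Strong monotonicity and the Lipschitz bound give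
`‖W_k‖² ≤ (1 - 2μβ_k + L²β_k²)‖x_k - x*‖²`, hence for `e_k = E‖x_k - x*‖²`
`e_{k+1} ≤ (1 - 2μβ_k + L²β_k²) e_k + β_k² σ²`. Since `K₀ ≥ βL²/μ` the factor is at most
`1 - βμ/(k + K₀)`, and `βμ ≥ 2` then makes the claimed bound `C/(k + K₀)` an inductive invariant.
-/

open MeasureTheory
open scoped ProbabilityTheory RealInnerProductSpace

theorem step_le_div_add_one {μ L σ β t C e : ℝ} (hμ : 0 < μ) (hβμ : 2 ≤ β * μ)
    (ht : β * μ ≤ t) (htL : β * L ^ 2 ≤ t * μ) (hC : 2 * β * σ ^ 2 ≤ C * μ)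
    (he : 0 ≤ e) (heC : e ≤ C / t) :
    (1 - 2 * μ * (β / t) + L ^ 2 * (β / t) ^ 2) * e + (β / t) ^ 2 * σ ^ 2 ≤ C / (t + 1) := by
  have hβ : 0 < β := pos_of_mul_pos_left (by linarith) hμ.le
  have ht0 : 0 < t := by linarith
  have hC0 : 0 ≤ C := (mul_nonneg_iff_of_pos_right hμ).1 (le_trans (by positivity) hC)
  have hq : 1 - 2 * μ * (β / t) + L ^ 2 * (β / t) ^ 2 ≤ 1 - β * μ / t := by
    have : L ^ 2 * (β / t) ^ 2 ≤ β * μ / t := by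
      rw [div_pow, ← mul_div_assoc, div_le_div_iff₀ (by positivity) ht0]
      nlinarith [mul_le_mul_of_nonneg_left htL (mul_pos hβ ht0).le]
    linarith [show 2 * μ * (β / t) = 2 * (β * μ / t) by ring]
  have hq0 : 0 ≤ 1 - β * μ / t := by rw [sub_nonneg, div_le_one ht0]; exact ht
  calc (1 - 2 * μ * (β / t) + L ^ 2 * (β / t) ^ 2) * e + (β / t) ^ 2 * σ ^ 2
      ≤ (1 - β * μ / t) * (C / t) + (β / t) ^ 2 * σ ^ 2 := by
        gcongr ?_ + _
        exact mul_le_mul hq heC he hq0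
    _ ≤ C / (t + 1) := by
        rw [show (1 - β * μ / t) * (C / t) + (β / t) ^ 2 * σ ^ 2
            = ((t - β * μ) * C + β ^ 2 * σ ^ 2) / t ^ 2 by field_simp,
          div_le_div_iff₀ (by positivity) (by positivity)]
        nlinarith [mul_le_mul_of_nonneg_left hβμ (mul_nonneg hC0 ht0.le),
          mul_le_mul_of_nonneg_left hC (mul_nonneg hβ.le (by linarith : (0:ℝ) ≤ t + 1))]

theorem le_div_add_of_recursion {μ L σ β K0 : ℝ} {e : ℕ → ℝ} (hμ : 0 < μ) (hβ : 2 / μ ≤ β)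
    (hK0 : β * L ^ 2 / μ + β * μ ≤ K0) (he : ∀ k, 0 ≤ e k)
    (hrec : ∀ k : ℕ, e (k + 1) ≤ (1 - 2 * μ * (β / (k + K0)) + L ^ 2 * (β / (k + K0)) ^ 2) * e k
      + (β / (k + K0)) ^ 2 * σ ^ 2) :
    ∀ k : ℕ, e k ≤ (K0 * e 0 + 2 * β * σ ^ 2 / μ) / (k + K0) := by
  have hβμ : 2 ≤ β * μ := (div_le_iff₀ hμ).1 hβ
  have hβpos : 0 < β := pos_of_mul_pos_left (by linarith) hμ.le
  have hK0L : β * L ^ 2 ≤ K0 * μ := (div_le_iff₀ hμ).1 (by linarith [mul_pos hβpos hμ])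
  have hK0 : β * μ ≤ K0 := by linarith [show 0 ≤ β * L ^ 2 / μ by positivity]
  have hK0pos : 0 < K0 := by linarith
  set C := K0 * e 0 + 2 * β * σ ^ 2 / μ
  have hC : 2 * β * σ ^ 2 ≤ C * μ := by
    rw [add_mul, div_mul_cancel₀ _ hμ.ne']
    nlinarith [mul_nonneg hK0pos.le (mul_nonneg (he 0) hμ.le)]
  intro k
  induction k with
  | zero =>
    rw [Nat.cast_zero, zero_add, le_div_iff₀ hK0pos]
    linarith [show 0 ≤ 2 * β * σ ^ 2 / μ by positivity]
  | succ k ih =>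
    have hKt : K0 ≤ k + K0 := le_add_of_nonneg_left k.cast_nonneg
    push_cast
    rw [add_right_comm]
    exact (hrec k).trans <| step_le_div_add_one hμ hβμ (hK0.trans hKt)
      (hK0L.trans (mul_le_mul_of_nonneg_right hKt hμ.le)) hC (he k) ih

section NaturalFiltration

variable {Ω S : Type*} [MeasurableSpace S]

theorem monotone_iSup_comap_range (η : ℕ → Ω → S) :
    Monotone fun k => ⨆ i ∈ Finset.range k, MeasurableSpace.comap (η i) ‹MeasurableSpace S› :=
  monotone_nat_of_le_succ fun _ =>
    biSup_mono fun _ hi => Finset.mem_range.2 (Nat.lt_succ_of_lt (Finset.mem_range.1 hi))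

theorem measurable_iSup_comap_range_succ (η : ℕ → Ω → S) (k : ℕ) :
    Measurable[⨆ i ∈ Finset.range (k + 1), MeasurableSpace.comap (η i) ‹MeasurableSpace S›]
      (η k) :=
  measurable_iff_comap_le.2 <|
    le_biSup (fun i => MeasurableSpace.comap (η i) _) (Finset.self_mem_range_succ k)

end NaturalFiltration

section Expectations

variable {Ω E : Type*} [NormedAddCommGroup E] {m m0 : MeasurableSpace Ω} {P : Measure Ω}

theorem integral_le_of_ae_condExp_le [IsProbabilityMeasure P] (hm : m ≤ m0) {f : Ω → ℝ} {c : ℝ}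
    (hfc : ∀ᵐ ω ∂P, P[f | m] ω ≤ c) : ∫ ω, f ω ∂P ≤ c :=
  calc ∫ ω, f ω ∂P = ∫ ω, P[f | m] ω ∂P := (integral_condExp hm).symm
    _ ≤ ∫ _, c ∂P := integral_mono_ae integrable_condExp (integrable_const c) hfc
    _ = c := by simp

theorem MeasureTheory.MemLp.comp_of_norm_le_mul_norm_sub [IsFiniteMeasure P] {X : Ω → E}
    {F : E → E} {L : ℝ} {p : ENNReal} {x₀ : E} (hX : MemLp X p P) (hF : Continuous F)
    (hFx₀ : ∀ y, ‖F y‖ ≤ L * ‖y - x₀‖) : MemLp (fun ω => F (X ω)) p P :=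
  (hX.sub (memLp_const x₀)).of_le_mul (hF.comp_aestronglyMeasurable hX.1)
    (ae_of_all _ fun ω => hFx₀ (X ω))

section Iterates

variable [NormedSpace ℝ E] {F : E → E} {x η : ℕ → Ω → E} {γ : ℕ → ℝ} {x₀ : E}

theorem stronglyMeasurable_sa_iterate {𝓕 : ℕ → MeasurableSpace Ω} (h𝓕 : Monotone 𝓕)
    (hF : Continuous F) (hη : ∀ k, StronglyMeasurable[𝓕 (k + 1)] (η k))
    (hx0 : ∀ ω, x 0 ω = x₀) (hxrec : ∀ k ω, x (k + 1) ω = x k ω - γ k • (F (x k ω) + η k ω)) :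
    ∀ k, StronglyMeasurable[𝓕 k] (x k) := by
  intro k
  induction k with
  | zero => rw [funext hx0]; exact stronglyMeasurable_const
  | succ k ih =>
    have hxk := ih.mono (h𝓕 k.le_succ)
    rw [funext (hxrec k)]
    exact hxk.sub (((hF.comp_stronglyMeasurable hxk).add (hη k)).const_smul (γ k))

theorem memLp_sa_iterate [IsFiniteMeasure P] {L : ℝ} {xstar : E} (hF : Continuous F)
    (hlip : ∀ y, ‖F y‖ ≤ L * ‖y - xstar‖) (hη : ∀ k, MemLp (η k) 2 P)
    (hx0 : ∀ ω, x 0 ω = x₀) (hxrec : ∀ k ω, x (k + 1) ω = x k ω - γ k • (F (x k ω) + η k ω)) :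
    ∀ k, MemLp (x k) 2 P := by
  intro k
  induction k with
  | zero => rw [funext hx0]; exact memLp_const x₀
  | succ k ih =>
    rw [funext (hxrec k)]
    exact ih.sub (((ih.comp_of_norm_le_mul_norm_sub hF hlip).add (hη k)).const_smul (γ k))

end Iterates

variable [InnerProductSpace ℝ E]

theorem norm_sub_smul_sq_le {a u : E} {μ L c : ℝ} (hc : 0 ≤ c) (hmono : μ * ‖a‖ ^ 2 ≤ ⟪u, a⟫)
    (hlip : ‖u‖ ≤ L * ‖a‖) :
    ‖a - c • u‖ ^ 2 ≤ (1 - 2 * μ * c + L ^ 2 * c ^ 2) * ‖a‖ ^ 2 := by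
  have hu : ‖u‖ ^ 2 ≤ L ^ 2 * ‖a‖ ^ 2 := by
    rw [← mul_pow]; exact pow_le_pow_left₀ (norm_nonneg u) hlip 2
  rw [norm_sub_sq_real, inner_smul_right, real_inner_comm, norm_smul, mul_pow,
    Real.norm_of_nonneg hc]
  nlinarith [mul_le_mul_of_nonneg_left hmono hc, mul_le_mul_of_nonneg_left hu (sq_nonneg c)]

theorem MeasureTheory.MemLp.integrable_inner {f g : Ω → E} (hf : MemLp f 2 P)
    (hg : MemLp g 2 P) : Integrable (fun ω => ⟪f ω, g ω⟫) P := by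
  refine (L2.integrable_inner (𝕜 := ℝ) (hf.toLp f) (hg.toLp g)).congr ?_
  filter_upwards [hf.coeFn_toLp, hg.coeFn_toLp] with ω hfω hgω
  rw [hfω, hgω]

variable [CompleteSpace E]

theorem integral_inner_eq_zero_of_condExp_eq_zero [IsFiniteMeasure P] (hm : m ≤ m0)
    {g η : Ω → E} (hg : StronglyMeasurable[m] g) (hgη : Integrable (fun ω => ⟪g ω, η ω⟫) P)
    (hη : Integrable η P) (hη0 : P[η | m] =ᵐ[P] 0) : ∫ ω, ⟪g ω, η ω⟫ ∂P = 0 :=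
  calc ∫ ω, ⟪g ω, η ω⟫ ∂P = ∫ ω, P[fun ω => ⟪g ω, η ω⟫ | m] ω ∂P := (integral_condExp hm).symm
    _ = ∫ _, (0 : ℝ) ∂P := by
      refine integral_congr_ae ?_
      filter_upwards [condExp_bilin_of_stronglyMeasurable_left (innerSL ℝ) hg hgη hη, hη0]
        with ω hpull hω
      exact hpull.trans (by rw [hω, Pi.zero_apply, map_zero])
    _ = 0 := integral_zero _ _

theorem integral_norm_sub_sq_of_condExp_eq_zero [IsFiniteMeasure P] (hm : m ≤ m0)
    {W η : Ω → E} (hW : StronglyMeasurable[m] W) (hW2 : MemLp W 2 P) (hη2 : MemLp η 2 P)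
    (hη0 : P[η | m] =ᵐ[P] 0) :
    ∫ ω, ‖W ω - η ω‖ ^ 2 ∂P = ∫ ω, ‖W ω‖ ^ 2 ∂P + ∫ ω, ‖η ω‖ ^ 2 ∂P := by
  have hWη := hW2.integrable_inner hη2
  have hW2' := hW2.integrable_norm_pow two_ne_zero
  have hW2η : Integrable (fun ω => ‖W ω‖ ^ 2 - 2 * ⟪W ω, η ω⟫) P := hW2'.sub (hWη.const_mul 2)
  simp_rw [norm_sub_sq_real]
  rw [integral_add hW2η (hη2.integrable_norm_pow two_ne_zero),
    integral_sub hW2' (hWη.const_mul 2), integral_const_mul,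
    integral_inner_eq_zero_of_condExp_eq_zero hm hW hWη (hη2.integrable one_le_two) hη0]
  ring

theorem integral_norm_sq_sa_step_le [IsProbabilityMeasure P] (hm : m ≤ m0) {F : E → E} {xstar : E}
    {μ L : ℝ} (hF : Continuous F)
    (hmono : ∀ y, μ * ‖y - xstar‖ ^ 2 ≤ ⟪F y, y - xstar⟫) (hlip : ∀ y, ‖F y‖ ≤ L * ‖y - xstar‖)
    {X η : Ω → E} {σ c : ℝ} (hc : 0 ≤ c) (hX : StronglyMeasurable[m] X) (hX2 : MemLp X 2 P)
    (hη2 : MemLp η 2 P) (hη0 : P[η | m] =ᵐ[P] 0) (hησ : ∫ ω, ‖η ω‖ ^ 2 ∂P ≤ σ ^ 2) :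
    ∫ ω, ‖X ω - c • (F (X ω) + η ω) - xstar‖ ^ 2 ∂P
      ≤ (1 - 2 * μ * c + L ^ 2 * c ^ 2) * ∫ ω, ‖X ω - xstar‖ ^ 2 ∂P + c ^ 2 * σ ^ 2 := by
  set W : Ω → E := fun ω => X ω - xstar - c • F (X ω)
  have hW : StronglyMeasurable[m] W :=
    (hX.sub stronglyMeasurable_const).sub ((hF.comp_stronglyMeasurable hX).const_smul c)
  have hXx2 : MemLp (fun ω => X ω - xstar) 2 P := hX2.sub (memLp_const xstar)
  have hW2 : MemLp W 2 P := hXx2.sub ((hX2.comp_of_norm_le_mul_norm_sub hF hlip).const_smul c)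
  have hcη0 : P[c • η | m] =ᵐ[P] 0 := by
    filter_upwards [condExp_smul c η m, hη0] with ω hcω hω
    simp [hcω, hω]
  have hsplit : ∀ ω, X ω - c • (F (X ω) + η ω) - xstar = W ω - (c • η) ω := fun ω => by
    simp only [W, Pi.smul_apply, smul_add]; abel
  have hWX : ∫ ω, ‖W ω‖ ^ 2 ∂P ≤ (1 - 2 * μ * c + L ^ 2 * c ^ 2) * ∫ ω, ‖X ω - xstar‖ ^ 2 ∂P := by
    rw [← integral_const_mul]
    exact integral_mono (hW2.integrable_norm_pow two_ne_zero)
      ((hXx2.integrable_norm_pow two_ne_zero).const_mul _)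
      fun ω => norm_sub_smul_sq_le hc (hmono (X ω)) (hlip (X ω))
  have hcη : ∫ ω, ‖(c • η) ω‖ ^ 2 ∂P ≤ c ^ 2 * σ ^ 2 := by
    simp only [Pi.smul_apply, norm_smul, mul_pow, Real.norm_eq_abs, sq_abs]
    rw [integral_const_mul]
    exact mul_le_mul_of_nonneg_left hησ (sq_nonneg c)
  simp_rw [hsplit]
  rw [integral_norm_sub_sq_of_condExp_eq_zero hm hW hW2 (hη2.const_smul c) hcη0]
  exact add_le_add hWX hcη

end Expectations

theorem stmt_0_general {d : ℕ} {Ω : Type*} [MeasureSpace Ω]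
    [IsProbabilityMeasure (ℙ : Measure Ω)]
    (F : EuclideanSpace ℝ (Fin d) → EuclideanSpace ℝ (Fin d))
    (μ L σ β K0 : ℝ) (hμ : 0 < μ)
    (hmono : ∀ x y, μ * ‖x - y‖ ^ 2 ≤ ⟪F x - F y, x - y⟫)
    (hlip : ∀ x y, ‖F x - F y‖ ≤ L * ‖x - y‖)
    (xstar : EuclideanSpace ℝ (Fin d)) (hstar : F xstar = 0)
    (x0 : EuclideanSpace ℝ (Fin d))
    (η : ℕ → Ω → EuclideanSpace ℝ (Fin d))
    (x : ℕ → Ω → EuclideanSpace ℝ (Fin d))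
    (hx0 : ∀ ω, x 0 ω = x0)
    (hxrec : ∀ (k : ℕ) (ω : Ω),
      x (k + 1) ω = x k ω - (β / ((k : ℝ) + K0)) • (F (x k ω) + η k ω))
    -- the filtration `𝓕 k = σ(x₀, η₀, …, η_{k−1})` (here `x₀` is deterministic)
    (𝓕 : ℕ → MeasurableSpace Ω)
    (h𝓕 : ∀ k, 𝓕 k = ⨆ i ∈ Finset.range k,
      MeasurableSpace.comap (η i) inferInstance)
    (h𝓕le : ∀ k, 𝓕 k ≤ (inferInstance : MeasurableSpace Ω))
    (hmeas : ∀ k, Measurable (η k))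
    (hint2 : ∀ k, Integrable (fun ω => ‖η k ω‖ ^ 2) (ℙ : Measure Ω))
    -- martingale difference: `E[η_k | 𝓕_k] = 0`
    (hmds : ∀ k, (ℙ : Measure Ω)[η k | 𝓕 k] =ᵐ[(ℙ : Measure Ω)] 0)
    -- conditional second moment bound: `E[‖η_k‖² | 𝓕_k] ≤ σ²` a.s.
    (hvar : ∀ k, ∀ᵐ ω ∂(ℙ : Measure Ω),
      ((ℙ : Measure Ω)[(fun ω' => ‖η k ω'‖ ^ 2) | 𝓕 k]) ω ≤ σ ^ 2)
    (hβ : β ≥ 2 / μ) (hK0 : K0 ≥ β * L ^ 2 / μ + β * μ) :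
    ∀ k : ℕ, ∫ ω, ‖x k ω - xstar‖ ^ 2 ∂(ℙ : Measure Ω)
      ≤ (K0 * ‖x0 - xstar‖ ^ 2 + 2 * β * σ ^ 2 / μ) / ((k : ℝ) + K0) := by
  have hF : Continuous F :=
    (LipschitzWith.of_dist_le' fun a b => by simpa only [dist_eq_norm] using hlip a b).continuous
  have hmono' : ∀ y, μ * ‖y - xstar‖ ^ 2 ≤ ⟪F y, y - xstar⟫ := by
    simpa only [hstar, sub_zero] using (hmono · xstar)
  have hlip' : ∀ y, ‖F y‖ ≤ L * ‖y - xstar‖ := by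
    simpa only [hstar, sub_zero] using (hlip · xstar)
  have h𝓕mono : Monotone 𝓕 := by
    rw [funext h𝓕]; exact monotone_iSup_comap_range η
  have hη𝓕 : ∀ k, StronglyMeasurable[𝓕 (k + 1)] (η k) := fun k => by
    rw [h𝓕]; exact (measurable_iSup_comap_range_succ η k).stronglyMeasurable
  have hη2 : ∀ k, MemLp (η k) 2 (ℙ : Measure Ω) := fun k =>
    (memLp_two_iff_integrable_sq_norm (hmeas k).aestronglyMeasurable).2 (hint2 k)
  have hx𝓕 := stronglyMeasurable_sa_iterate h𝓕mono hF hη𝓕 hx0 hxrec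
  have hx2 := memLp_sa_iterate hF hlip' hη2 hx0 hxrec
  have hβpos : 0 < β := lt_of_lt_of_le (by positivity) hβ
  have hK0pos : 0 < K0 := lt_of_lt_of_le (by positivity) hK0
  intro k
  have he0 : ∫ ω, ‖x 0 ω - xstar‖ ^ 2 ∂(ℙ : Measure Ω) = ‖x0 - xstar‖ ^ 2 := by simp [hx0]
  rw [← he0]
  refine le_div_add_of_recursion (e := fun k => ∫ ω, ‖x k ω - xstar‖ ^ 2 ∂(ℙ : Measure Ω))
    hμ hβ hK0 (fun k => integral_nonneg fun ω => by positivity) (fun k => ?_) k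
  simp_rw [hxrec k]
  exact integral_norm_sq_sa_step_le (h𝓕le k) hF hmono' hlip' (by positivity) (hx𝓕 k) (hx2 k)
    (hη2 k) (hmds k) (integral_le_of_ae_condExp_le (h𝓕le k) (hvar k))

/-- Finite-time bound for SA under light-tailed martingale difference noise:
for the iteration `x_{k+1} = x_k − β_k(F(x_k) + η_k)`, `β_k = β/(k+K₀)`, with
`F` `μ`-strongly monotone and `L`-Lipschitz, martingale difference noise with
conditional second moment bounded by `σ²`, if `β ≥ 2/μ` and
`K₀ ≥ βL²/μ + βμ`, then `E[‖x_k − x*‖²] ≤ (K₀‖x₀ − x*‖² + 2βσ²/μ)/(k + K₀)`. -/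
theorem stmt_0 {d : ℕ} {Ω : Type*} [MeasureSpace Ω]
    [IsProbabilityMeasure (ℙ : Measure Ω)]
    (F : EuclideanSpace ℝ (Fin d) → EuclideanSpace ℝ (Fin d))
    (μ L σ β K0 : ℝ) (hμ : 0 < μ) (hL : 0 < L) (hσ : 0 < σ)
    (hβpos : 0 < β) (hK0pos : 0 < K0)
    (hmono : ∀ x y, μ * ‖x - y‖ ^ 2 ≤ ⟪F x - F y, x - y⟫)
    (hlip : ∀ x y, ‖F x - F y‖ ≤ L * ‖x - y‖)
    (xstar : EuclideanSpace ℝ (Fin d)) (hstar : F xstar = 0)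
    (x0 : EuclideanSpace ℝ (Fin d))
    (η : ℕ → Ω → EuclideanSpace ℝ (Fin d))
    (x : ℕ → Ω → EuclideanSpace ℝ (Fin d))
    (hx0 : ∀ ω, x 0 ω = x0)
    (hxrec : ∀ (k : ℕ) (ω : Ω),
      x (k + 1) ω = x k ω - (β / ((k : ℝ) + K0)) • (F (x k ω) + η k ω))
    -- the filtration `𝓕 k = σ(x₀, η₀, …, η_{k−1})` (here `x₀` is deterministic)
    (𝓕 : ℕ → MeasurableSpace Ω)
    (h𝓕 : ∀ k, 𝓕 k = ⨆ i ∈ Finset.range k,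
      MeasurableSpace.comap (η i) inferInstance)
    (h𝓕le : ∀ k, 𝓕 k ≤ (inferInstance : MeasurableSpace Ω))
    (hmeas : ∀ k, Measurable (η k))
    (hint : ∀ k, Integrable (η k) (ℙ : Measure Ω))
    (hint2 : ∀ k, Integrable (fun ω => ‖η k ω‖ ^ 2) (ℙ : Measure Ω))
    -- martingale difference: `E[η_k | 𝓕_k] = 0`
    (hmds : ∀ k, (ℙ : Measure Ω)[η k | 𝓕 k] =ᵐ[(ℙ : Measure Ω)] 0)
    -- conditional second moment bound: `E[‖η_k‖² | 𝓕_k] ≤ σ²` a.s.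
    (hvar : ∀ k, ∀ᵐ ω ∂(ℙ : Measure Ω),
      ((ℙ : Measure Ω)[(fun ω' => ‖η k ω'‖ ^ 2) | 𝓕 k]) ω ≤ σ ^ 2)
    (hβ : β ≥ 2 / μ) (hK0 : K0 ≥ β * L ^ 2 / μ + β * μ) :
    ∀ k : ℕ, ∫ ω, ‖x k ω - xstar‖ ^ 2 ∂(ℙ : Measure Ω)
      ≤ (K0 * ‖x0 - xstar‖ ^ 2 + 2 * β * σ ^ 2 / μ) / ((k : ℝ) + K0) :=
  stmt_0_general F μ L σ β K0 hμ hmono hlip xstar hstar x0 η x hx0 hxrec 𝓕 h𝓕 h𝓕le hmeas hint2 hmds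
    hvar hβ hK0
end

section
/- Suppose β̃ ≥ 2 and β̃_k ≤ 1 for all k (which holds when K_0 ≥ β̃). Then for all k ≥ 0, E[‖U_k‖²] ≤ (6ζ²σ²/(1−δ))·k^{1−δ}·β̃_k ≤ (6ζσ²/(1−δ))·β/(k+K_0)^δ. -/
/-!
Unrolling the recursion gives `U_k = ∑_{i<k} w_{i,k} η̃_i` with nonnegative weights of total
mass at most `1`; when `β̃ ≥ 1` the weights increase in `i`, so each is at most
`β̃_{k-1} ≤ 2 β̃_k`. Hence `E‖U_k‖² = ζ² ∑_{i,l} w_i w_l γ(|i - l|)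
≤ ζ² σ² · 2 β̃_k · max_i ∑_{l<k} (1 + |i - l|)^{-δ} ≤ 4 ζ² σ² β̃_k k^{1-δ} / (1 - δ)`, the last
step comparing `∑_{h<k} (1 + h)^{-δ}` with `∫_0^k x^{-δ} dx`.
-/

open Finset MeasureTheory ProbabilityTheory
open scoped RealInnerProductSpace

lemma one_sub_mul_one_add_rpow_neg_le {δ x : ℝ} (hδ0 : 0 ≤ δ) (hδ1 : δ ≤ 1) (hx : 0 ≤ x) :
    (1 - δ) * (1 + x) ^ (-δ) ≤ (1 + x) ^ (1 - δ) - x ^ (1 - δ) := by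
  have hx1 : 0 < 1 + x := by linarith
  have hinv : (1 + x)⁻¹ ≤ 1 := inv_le_one_of_one_le₀ (by linarith)
  -- Bernoulli: `x ^ p = (1 + x) ^ p * (1 - 1 / (1 + x)) ^ p ≤ (1 + x) ^ p * (1 - p / (1 + x))`
  have hbern := rpow_one_add_le_one_add_mul_self (neg_le_neg hinv) (p := 1 - δ)
    (by linarith) (by linarith)
  have hsplit : x = (1 + x) * (1 + -(1 + x)⁻¹) := by field_simp; ring
  have hpow : (1 + x) ^ (-δ) = (1 + x) ^ (1 - δ) * (1 + x)⁻¹ := by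
    rw [Real.rpow_sub hx1, Real.rpow_one, Real.rpow_neg hx1.le]; field_simp
  calc (1 - δ) * (1 + x) ^ (-δ)
      = (1 + x) ^ (1 - δ) - (1 + x) ^ (1 - δ) * (1 + (1 - δ) * -(1 + x)⁻¹) := by
        rw [hpow]; ring
    _ ≤ (1 + x) ^ (1 - δ) - (1 + x) ^ (1 - δ) * (1 + -(1 + x)⁻¹) ^ (1 - δ) := by
        gcongr
    _ = (1 + x) ^ (1 - δ) - x ^ (1 - δ) := by
        rw [← Real.mul_rpow hx1.le (by linarith), ← hsplit]

lemma sum_range_one_add_rpow_neg_le {δ : ℝ} (hδ0 : 0 ≤ δ) (hδ1 : δ < 1) (k : ℕ) :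
    ∑ h ∈ range k, (1 + (h : ℝ)) ^ (-δ) ≤ (k : ℝ) ^ (1 - δ) / (1 - δ) := by
  have hδ' : 0 < 1 - δ := by linarith
  calc ∑ h ∈ range k, (1 + (h : ℝ)) ^ (-δ)
      ≤ ∑ h ∈ range k, ((((h + 1 : ℕ) : ℝ)) ^ (1 - δ) - (h : ℝ) ^ (1 - δ)) / (1 - δ) := by
        gcongr with h
        rw [le_div_iff₀ hδ', mul_comm, Nat.cast_succ, add_comm (h : ℝ)]
        exact one_sub_mul_one_add_rpow_neg_le hδ0 hδ1.le h.cast_nonneg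
    _ = (k : ℝ) ^ (1 - δ) / (1 - δ) := by
        rw [← sum_div, sum_range_sub (fun h : ℕ => (h : ℝ) ^ (1 - δ)), Nat.cast_zero,
          Real.zero_rpow hδ'.ne', sub_zero]

lemma sum_range_comp_dist_le {f : ℕ → ℝ} (hf : ∀ h, 0 ≤ f h) {i k : ℕ} (hik : i < k) :
    ∑ l ∈ range k, f (Nat.dist i l) ≤ 2 * ∑ h ∈ range k, f h := by
  have hinj : ∀ (s : Finset ℕ) (g : ℕ → ℕ), Set.InjOn g s → (∀ l ∈ s, g l < k) →
      ∑ l ∈ s, f (g l) ≤ ∑ h ∈ range k, f h := by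
    intro s g hg hlt
    rw [← sum_image hg]
    refine sum_le_sum_of_subset_of_nonneg ?_ fun h _ _ => hf h
    intro h hh
    obtain ⟨l, hl, rfl⟩ := mem_image.mp hh
    exact mem_range.mpr (hlt l hl)
  rw [← sum_filter_add_sum_filter_not (range k) (· ≤ i), two_mul]
  gcongr
  · calc ∑ l ∈ range k with l ≤ i, f (Nat.dist i l) = ∑ l ∈ range k with l ≤ i, f (i - l) := by
          refine sum_congr rfl fun l hl => ?_
          rw [Nat.dist_comm, Nat.dist_eq_sub_of_le (mem_filter.mp hl).2]
      _ ≤ _ := hinj _ _ (fun l hl l' hl' h => by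
          simp only [coe_filter, mem_range, Set.mem_ofPred_eq] at hl hl' h; omega)
          fun l _ => by omega
  · calc ∑ l ∈ range k with ¬l ≤ i, f (Nat.dist i l) = ∑ l ∈ range k with ¬l ≤ i, f (l - i) := by
          refine sum_congr rfl fun l hl => ?_
          rw [Nat.dist_eq_sub_of_le (not_le.mp (mem_filter.mp hl).2).le]
      _ ≤ _ := hinj _ _ (fun l hl l' hl' h => by
          simp only [coe_filter, mem_range, Set.mem_ofPred_eq] at hl hl' h; omega)
          fun l hl => by simp only [mem_filter, mem_range] at hl; omega

noncomputable def averagingWeight (b : ℕ → ℝ) (i k : ℕ) : ℝ :=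
  b i * ∏ j ∈ Ico (i + 1) k, (1 - b j)

section averagingWeight

variable {b : ℕ → ℝ}

lemma averagingWeight_succ_of_lt {i k : ℕ} (h : i < k) :
    averagingWeight b i (k + 1) = averagingWeight b i k * (1 - b k) := by
  rw [averagingWeight, averagingWeight, prod_Ico_succ_top h, mul_assoc]

lemma averagingWeight_succ_self (k : ℕ) : averagingWeight b k (k + 1) = b k := by
  simp [averagingWeight]

lemma eq_sum_averagingWeight_smul {M : Type*} [AddCommGroup M] [Module ℝ M] {U X : ℕ → M}
    (h0 : U 0 = 0) (hrec : ∀ k, U (k + 1) = (1 - b k) • U k + b k • X k) (k : ℕ) :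
    U k = ∑ i ∈ range k, averagingWeight b i k • X i := by
  induction k with
  | zero => simp [h0]
  | succ k ih =>
    rw [hrec, ih, sum_range_succ, averagingWeight_succ_self, smul_sum]
    congr 1
    refine sum_congr rfl fun i hi => ?_
    rw [averagingWeight_succ_of_lt (mem_range.mp hi), smul_smul, mul_comm]

lemma sum_averagingWeight (k : ℕ) :
    ∑ i ∈ range k, averagingWeight b i k = 1 - ∏ j ∈ range k, (1 - b j) := by
  induction k with
  | zero => simp
  | succ k ih =>
    rw [sum_range_succ, prod_range_succ, averagingWeight_succ_self,
      sum_congr rfl fun i hi => averagingWeight_succ_of_lt (mem_range.mp hi), ← sum_mul, ih]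
    ring

variable (hb : ∀ j, b j ≤ 1)
include hb

lemma averagingWeight_nonneg (hb0 : ∀ j, 0 ≤ b j) (i k : ℕ) : 0 ≤ averagingWeight b i k :=
  mul_nonneg (hb0 i) (prod_nonneg fun j _ => sub_nonneg.mpr (hb j))

lemma sum_averagingWeight_le_one (k : ℕ) : ∑ i ∈ range k, averagingWeight b i k ≤ 1 := by
  rw [sum_averagingWeight, sub_le_self_iff]
  exact prod_nonneg fun j _ => sub_nonneg.mpr (hb j)

lemma averagingWeight_le_of_lt (hstep : ∀ j, b j * (1 - b (j + 1)) ≤ b (j + 1)) {i k : ℕ}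
    (hik : i < k) : averagingWeight b i k ≤ b (k - 1) := by
  obtain ⟨n, rfl⟩ : ∃ n, k = i + n + 1 := ⟨k - i - 1, by omega⟩
  induction n generalizing i with
  | zero => simp [averagingWeight_succ_self]
  | succ n ih =>
    calc averagingWeight b i (i + (n + 1) + 1)
        = b i * (1 - b (i + 1)) * ∏ j ∈ Ico (i + 1 + 1) (i + (n + 1) + 1), (1 - b j) := by
          rw [averagingWeight, prod_eq_prod_Ico_succ_bot (by omega), mul_assoc]
      _ ≤ b (i + 1) * ∏ j ∈ Ico (i + 1 + 1) (i + (n + 1) + 1), (1 - b j) := by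
          gcongr ?_ * _
          · exact prod_nonneg fun j _ => sub_nonneg.mpr (hb j)
          · exact hstep i
      _ ≤ b (i + (n + 1) + 1 - 1) := by
          have := ih (i := i + 1) (by omega)
          rwa [averagingWeight, show i + 1 + n + 1 = i + (n + 1) + 1 by omega] at this

end averagingWeight

lemma averagingWeight_harmonic_le {c K0 : ℝ} (hc : 1 ≤ c) (hK0 : 0 < K0)
    (hb : ∀ j : ℕ, c / ((j : ℝ) + K0) ≤ 1) {i k : ℕ} (hik : i < k) :
    averagingWeight (fun j : ℕ => c / ((j : ℝ) + K0)) i k ≤ 2 * (c / ((k : ℝ) + K0)) := by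
  have hK0c : c ≤ K0 := by simpa [div_le_one hK0] using hb 0
  have hstep : ∀ j : ℕ, c / ((j : ℝ) + K0) * (1 - c / (((j + 1 : ℕ) : ℝ) + K0))
      ≤ c / (((j + 1 : ℕ) : ℝ) + K0) := by
    intro j
    have hj : (0 : ℝ) < j + K0 := by positivity
    rw [Nat.cast_succ, div_mul_eq_mul_div, div_le_div_iff₀ hj (by positivity)]
    field_simp
    nlinarith
  have hk : (1 : ℝ) ≤ k := Nat.one_le_cast.mpr (by omega)
  refine (averagingWeight_le_of_lt hb hstep hik).trans ?_
  rw [Nat.cast_pred (by omega), mul_div_assoc', div_le_div_iff₀ (by linarith) (by positivity)]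
  nlinarith

lemma integral_norm_sum_smul_sq {Ω ι E : Type*} [MeasurableSpace Ω] {μ : Measure Ω}
    [NormedAddCommGroup E] [InnerProductSpace ℝ E] (s : Finset ι) (a : ι → ℝ) (X : ι → Ω → E)
    (hX : ∀ i j, Integrable (fun ω => ⟪X i ω, X j ω⟫) μ) :
    ∫ ω, ‖∑ i ∈ s, a i • X i ω‖ ^ 2 ∂μ = ∑ i ∈ s, ∑ j ∈ s, a i * a j * ∫ ω, ⟪X i ω, X j ω⟫ ∂μ := by
  have hexpand : ∀ ω, ‖∑ i ∈ s, a i • X i ω‖ ^ 2 = ∑ i ∈ s, ∑ j ∈ s, a i * a j * ⟪X i ω, X j ω⟫ := by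
    intro ω
    rw [← real_inner_self_eq_norm_sq, sum_inner]
    refine sum_congr rfl fun i _ => ?_
    rw [inner_sum]
    refine sum_congr rfl fun j _ => ?_
    rw [real_inner_smul_left, real_inner_smul_right, mul_assoc]
  simp_rw [hexpand]
  rw [integral_finsetSum _ fun i _ => integrable_finsetSum _ fun j _ => (hX i j).const_mul _]
  refine sum_congr rfl fun i _ => ?_
  rw [integral_finsetSum _ fun j _ => (hX i j).const_mul _]
  simp_rw [integral_const_mul]

lemma sum_sum_mul_le_of_le_comp_dist {k : ℕ} {w : ℕ → ℝ} {C : ℕ → ℕ → ℝ} {g : ℕ → ℝ} {B : ℝ}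
    (hw0 : ∀ i, 0 ≤ w i) (hw1 : ∑ i ∈ range k, w i ≤ 1) (hwB : ∀ i < k, w i ≤ B) (hB : 0 ≤ B)
    (hg : ∀ h, 0 ≤ g h) (hC : ∀ i l, C i l ≤ g (Nat.dist i l)) :
    ∑ i ∈ range k, ∑ l ∈ range k, w i * w l * C i l ≤ 2 * B * ∑ h ∈ range k, g h := by
  have hM : 0 ≤ 2 * B * ∑ h ∈ range k, g h := by
    have := sum_nonneg fun h (_ : h ∈ range k) => hg h
    positivity
  calc ∑ i ∈ range k, ∑ l ∈ range k, w i * w l * C i l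
      ≤ ∑ i ∈ range k, w i * ∑ l ∈ range k, B * g (Nat.dist i l) := by
        refine sum_le_sum fun i _ => ?_
        rw [mul_sum]
        refine sum_le_sum fun l hl => ?_
        rw [mul_assoc]
        refine mul_le_mul_of_nonneg_left ?_ (hw0 i)
        exact (mul_le_mul_of_nonneg_left (hC i l) (hw0 l)).trans
            (mul_le_mul_of_nonneg_right (hwB l (mem_range.mp hl)) (hg _))
    _ ≤ ∑ i ∈ range k, w i * (2 * B * ∑ h ∈ range k, g h) := by
        refine sum_le_sum fun i hi => mul_le_mul_of_nonneg_left ?_ (hw0 i)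
        rw [← mul_sum, mul_comm 2, mul_assoc]
        exact mul_le_mul_of_nonneg_left (sum_range_comp_dist_le hg (mem_range.mp hi)) hB
    _ ≤ 2 * B * ∑ h ∈ range k, g h := by
        rw [← sum_mul]
        exact mul_le_of_le_one_left hM hw1

lemma rpow_one_sub_div_le_one_div_rpow {x y δ : ℝ} (hx : 0 ≤ x) (hxy : x ≤ y) (hδ : δ ≤ 1) :
    x ^ (1 - δ) / y ≤ 1 / y ^ δ := by
  rcases (hx.trans hxy).eq_or_lt with rfl | hy
  · rw [div_zero]; positivity
  calc x ^ (1 - δ) / y ≤ y ^ (1 - δ) / y := by gcongr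
    _ = 1 / y ^ δ := by rw [Real.rpow_sub hy, Real.rpow_one, div_div_cancel_left' hy.ne', one_div]

theorem stmt_9_general {d : ℕ} {Ω : Type*} [MeasureSpace Ω]
    (ζ β K0 σ δ : ℝ) (hζ : 0 < ζ) (hβpos : 0 < β) (hK0pos : 0 < K0)
    (hδ0 : 0 < δ) (hδ1 : δ < 1)
    (η U : ℕ → Ω → EuclideanSpace ℝ (Fin d)) (γ : ℕ → ℝ)
    (hintcov : ∀ i j, Integrable (fun ω => ⟪η i ω, η j ω⟫) (ℙ : Measure Ω))
    (hcov : ∀ i j : ℕ, ∫ ω, ⟪η i ω, η j ω⟫ ∂(ℙ : Measure Ω) = γ (Nat.dist i j))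
    (hγ : ∀ h : ℕ, |γ h| ≤ σ ^ 2 * ((1 : ℝ) + (h : ℝ)) ^ (-δ))
    (hU0 : ∀ ω, U 0 ω = 0)
    (hUrec : ∀ (k : ℕ) (ω : Ω),
      U (k + 1) ω = (1 - (β / ζ) / ((k : ℝ) + K0)) • U k ω
        + ((β / ζ) / ((k : ℝ) + K0)) • (-ζ • η k ω))
    (hβ : β / ζ ≥ 2)
    (hstep : ∀ k : ℕ, (β / ζ) / ((k : ℝ) + K0) ≤ 1) :
    ∀ k : ℕ,
      (∫ ω, ‖U k ω‖ ^ 2 ∂(ℙ : Measure Ω)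
          ≤ (6 * ζ ^ 2 * σ ^ 2 / (1 - δ)) * (k : ℝ) ^ (1 - δ)
              * ((β / ζ) / ((k : ℝ) + K0))) ∧
        (6 * ζ ^ 2 * σ ^ 2 / (1 - δ)) * (k : ℝ) ^ (1 - δ) * ((β / ζ) / ((k : ℝ) + K0))
          ≤ (6 * ζ * σ ^ 2 / (1 - δ)) * (β / ((k : ℝ) + K0) ^ δ) := by
  set b : ℕ → ℝ := fun j => β / ζ / ((j : ℝ) + K0)
  have hδ' : 0 < 1 - δ := by linarith
  intro k
  refine ⟨?_, ?_⟩
  · have hrep : ∀ ω, U k ω = ∑ i ∈ range k, (-ζ * averagingWeight b i k) • η i ω := by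
      intro ω
      rw [eq_sum_averagingWeight_smul (U := (U · ω)) (hU0 ω) (hUrec · ω) k]
      simp_rw [smul_smul, mul_comm]
      rfl
    calc ∫ ω, ‖U k ω‖ ^ 2
        = ∑ i ∈ range k, ∑ l ∈ range k,
            averagingWeight b i k * averagingWeight b l k * (ζ ^ 2 * γ (Nat.dist i l)) := by
          simp_rw [hrep, integral_norm_sum_smul_sq _ _ _ hintcov, hcov]
          exact sum_congr rfl fun i _ => sum_congr rfl fun l _ => by ring
      _ ≤ 2 * (2 * b k) * ∑ h ∈ range k, ζ ^ 2 * σ ^ 2 * (1 + (h : ℝ)) ^ (-δ) :=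
          sum_sum_mul_le_of_le_comp_dist (averagingWeight_nonneg hstep (fun _ => by positivity) · k)
            (sum_averagingWeight_le_one hstep k)
            (fun _ hi => averagingWeight_harmonic_le (by linarith) hK0pos hstep hi)
            (by positivity) (fun _ => by positivity) fun i l => by
              rw [mul_assoc]
              exact mul_le_mul_of_nonneg_left ((le_abs_self _).trans (hγ _)) (sq_nonneg ζ)
      _ = 4 * (ζ ^ 2 * σ ^ 2 * (∑ h ∈ range k, (1 + (h : ℝ)) ^ (-δ)) * b k) := by
          rw [← mul_sum]; ring
      _ ≤ 4 * (ζ ^ 2 * σ ^ 2 * ((k : ℝ) ^ (1 - δ) / (1 - δ)) * b k) := by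
          gcongr
          exact sum_range_one_add_rpow_neg_le hδ0.le hδ1 k
      _ ≤ 6 * (ζ ^ 2 * σ ^ 2 * ((k : ℝ) ^ (1 - δ) / (1 - δ)) * b k) := by
          have hk : 0 ≤ (k : ℝ) ^ (1 - δ) / (1 - δ) := div_nonneg (by positivity) hδ'.le
          have hb : 0 ≤ b k := by positivity
          linarith [mul_nonneg (mul_nonneg (by positivity : 0 ≤ ζ ^ 2 * σ ^ 2) hk) hb]
      _ = _ := by ring
  · calc _ = 6 * ζ * σ ^ 2 * β / (1 - δ) * ((k : ℝ) ^ (1 - δ) / ((k : ℝ) + K0)) := by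
          field_simp
      _ ≤ 6 * ζ * σ ^ 2 * β / (1 - δ) * (1 / ((k : ℝ) + K0) ^ δ) :=
          mul_le_mul_of_nonneg_left
            (rpow_one_sub_div_le_one_div_rpow k.cast_nonneg (by linarith) hδ1.le)
            (div_nonneg (by positivity) hδ'.le)
      _ = _ := by ring

/-- Let `{η_k}` be a zero-mean, weakly stationary process in `ℝ^d` with
autocovariance `γ(|j−i|) = E[⟨η_i, η_j⟩]` satisfying `|γ(h)| ≤ σ²(1+h)^{−δ}`,
`δ ∈ (0,1)`. With `β̃ = β/ζ`, `β̃_k = β̃/(k+K₀)`, `η̃_k = −ζη_k` and averaged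
noise `U₀ = 0`, `U_{k+1} = (1−β̃_k)U_k + β̃_k η̃_k`: if `β̃ ≥ 2` and `β̃_k ≤ 1`
for all `k`, then for all `k`,
`E[‖U_k‖²] ≤ (6ζ²σ²/(1−δ))·k^{1−δ}·β̃_k ≤ (6ζσ²/(1−δ))·β/(k+K₀)^δ`. -/
theorem stmt_9 {d : ℕ} {Ω : Type*} [MeasureSpace Ω]
    [IsProbabilityMeasure (ℙ : Measure Ω)]
    (ζ β K0 σ δ : ℝ) (hζ : 0 < ζ) (hβpos : 0 < β) (hK0pos : 0 < K0)
    (hσ : 0 < σ) (hδ0 : 0 < δ) (hδ1 : δ < 1)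
    (η U : ℕ → Ω → EuclideanSpace ℝ (Fin d)) (γ : ℕ → ℝ)
    (hmeas : ∀ k, Measurable (η k))
    (hint : ∀ k, Integrable (η k) (ℙ : Measure Ω))
    (hmean : ∀ k, ∫ ω, η k ω ∂(ℙ : Measure Ω) = 0)
    (hintcov : ∀ i j, Integrable (fun ω => ⟪η i ω, η j ω⟫) (ℙ : Measure Ω))
    (hcov : ∀ i j : ℕ, ∫ ω, ⟪η i ω, η j ω⟫ ∂(ℙ : Measure Ω) = γ (Nat.dist i j))
    (hγ : ∀ h : ℕ, |γ h| ≤ σ ^ 2 * ((1 : ℝ) + (h : ℝ)) ^ (-δ))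
    (hU0 : ∀ ω, U 0 ω = 0)
    (hUrec : ∀ (k : ℕ) (ω : Ω),
      U (k + 1) ω = (1 - (β / ζ) / ((k : ℝ) + K0)) • U k ω
        + ((β / ζ) / ((k : ℝ) + K0)) • (-ζ • η k ω))
    (hβ : β / ζ ≥ 2)
    (hstep : ∀ k : ℕ, (β / ζ) / ((k : ℝ) + K0) ≤ 1) :
    ∀ k : ℕ,
      (∫ ω, ‖U k ω‖ ^ 2 ∂(ℙ : Measure Ω)
          ≤ (6 * ζ ^ 2 * σ ^ 2 / (1 - δ)) * (k : ℝ) ^ (1 - δ)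
              * ((β / ζ) / ((k : ℝ) + K0))) ∧
        (6 * ζ ^ 2 * σ ^ 2 / (1 - δ)) * (k : ℝ) ^ (1 - δ) * ((β / ζ) / ((k : ℝ) + K0))
          ≤ (6 * ζ * σ ^ 2 / (1 - δ)) * (β / ((k : ℝ) + K0) ^ δ) :=
  stmt_9_general ζ β K0 σ δ hζ hβpos hK0pos hδ0 hδ1 η U γ hintcov hcov hγ hU0 hUrec hβ hstep
end

section
/- Let a > 0 and φ, K_0 > 0, and set φ_k = φ/(k+K_0). If φ > 1/a and a·φ_k ≤ 1 for all k, then for all k ≥ 0, ∏_{i=0}^{k−1}(1 − a·φ_i) ≤ K_0/(k + K_0). -/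
open Finset

/-- Let `a > 0` and `φ, K₀ > 0`, and set `φ_k = φ/(k+K₀)`. If `φ > 1/a` and
`a·φ_k ≤ 1` for all `k`, then for all `k ≥ 0`,
`∏_{i=0}^{k−1}(1 − a·φ_i) ≤ K₀/(k + K₀)` (the empty product equals 1). -/
theorem stmt_11 (a φ K0 : ℝ) (ha : 0 < a) (hφ : 0 < φ) (hK0 : 0 < K0)
    (hφa : φ > 1 / a) (hstep : ∀ k : ℕ, a * (φ / ((k : ℝ) + K0)) ≤ 1) :
    ∀ k : ℕ, ∏ i ∈ Finset.range k, (1 - a * (φ / ((i : ℝ) + K0))) ≤ K0 / ((k : ℝ) + K0) := by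
  intro k
  induction k with
  | zero => simp [hK0.ne']
  | succ k ih =>
    rw [Finset.prod_range_succ]
    have hden : (0 : ℝ) < (k : ℝ) + K0 := by positivity
    have hfac0 : (0 : ℝ) ≤ 1 - a * (φ / ((k : ℝ) + K0)) := by
      linarith [hstep k]
    have haφ : 1 < a * φ := by
      rw [gt_iff_lt, div_lt_iff₀ ha] at hφa
      linarith [mul_comm a φ]
    have hfac : 1 - a * (φ / ((k : ℝ) + K0)) ≤ 1 - 1 / ((k : ℝ) + K0) := by
      rw [mul_div_assoc'] at *
      gcongr
    calc (∏ i ∈ Finset.range k, (1 - a * (φ / ((i : ℝ) + K0)))) * (1 - a * (φ / ((k : ℝ) + K0)))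
        ≤ (K0 / ((k : ℝ) + K0)) * (1 - 1 / ((k : ℝ) + K0)) := by
          apply mul_le_mul ih hfac hfac0 (by positivity)
      _ ≤ K0 / ((k : ℝ) + 1 + K0) := by
          rw [div_mul_eq_mul_div, div_le_div_iff₀ (by positivity) (by positivity)]
          have h1 : 1 - 1 / ((k : ℝ) + K0) = ((k : ℝ) + K0 - 1) / ((k : ℝ) + K0) := by
            field_simp
          rw [h1]
          rw [show K0 * (((k:ℝ) + K0 - 1) / ((k:ℝ) + K0)) * ((k:ℝ) + 1 + K0)
              = (K0 * ((k:ℝ) + K0 - 1) * ((k:ℝ) + 1 + K0)) / ((k:ℝ) + K0) by ring,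
            div_le_iff₀ hden]
          nlinarith
    push_cast
    linarith
end

section
/- Let a, φ, K, ε > 0 and e ∈ (1,2], and set φ_k = φ/(k+K) and ε_k = ε/(k+K)^e. If φ ≥ 2(e−1)/a and a·φ_k ≤ 1 for all k, then for all k ≥ 0, Σ_{i=0}^{k−1} ε_i ∏_{j=i+1}^{k−1}(1 − a·φ_j) ≤ (2/a)·(ε_k/φ_k). -/
open Finset


-- key : x^(1-e) - (x+1)^(1-e) ≤ (e-1) * x^(-e)
lemma key (e : ℝ) (he1 : 1 < e) (he2 : e ≤ 2) {x : ℝ} (hx : 0 < x) :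
    x ^ (1 - e) - (x + 1) ^ (1 - e) ≤ (e - 1) * x ^ (-e) := by
  set p := e - 1 with hp
  have hp0 : 0 < p := by simp [hp]; linarith
  have hp1 : p ≤ 1 := by simp [hp]; linarith
  have hx1 : (0:ℝ) < x + 1 := by linarith
  have hinv : (0:ℝ) < 1 / x := by positivity
  -- (1 + 1/x)^p ≤ 1 + p/x
  have hb : (1 + 1/x) ^ p ≤ 1 + p * (1/x) :=
    rpow_one_add_le_one_add_mul_self (by linarith) hp0.le hp1
  -- (x+1)^p = x^p * (1+1/x)^p
  have hxp : (0:ℝ) < x ^ p := Real.rpow_pos_of_pos hx p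
  have hfac : (x + 1) ^ p = x ^ p * (1 + 1/x) ^ p := by
    rw [← Real.mul_rpow hx.le (by positivity)]
    congr 1
    field_simp
  have h1 : (x + 1) ^ p ≤ x ^ p * (1 + p / x) := by
    rw [hfac]
    apply mul_le_mul_of_nonneg_left _ hxp.le
    simpa [div_eq_mul_inv, mul_comm] using hb
  -- so (x+1)^(1-e) = ((x+1)^p)⁻¹ ≥ (x^p * (1+p/x))⁻¹
  have hone : 1 - e = -p := by ring
  have hxe : -e = -p - 1 := by ring
  rw [hone, hxe]
  rw [Real.rpow_neg hx.le, Real.rpow_neg hx1.le]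
  have h2 : (x ^ p * (1 + p / x))⁻¹ ≤ ((x + 1) ^ p)⁻¹ := by
    apply inv_anti₀ (Real.rpow_pos_of_pos hx1 p) h1
  have h3 : (x ^ p)⁻¹ - (x ^ p * (1 + p / x))⁻¹ ≤ p * x ^ (-p - 1) := by
    have hd : (0:ℝ) < 1 + p / x := by positivity
    rw [mul_inv, ← mul_one_sub]
    have : 1 - (1 + p / x)⁻¹ ≤ p / x := by
      have h5 : (1 + p/x)⁻¹ ≥ 1 - p/x := by
        nlinarith [mul_inv_cancel₀ hd.ne', sq_nonneg (p/x), inv_pos.mpr hd]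
      linarith
    calc (x ^ p)⁻¹ * (1 - (1 + p / x)⁻¹) ≤ (x ^ p)⁻¹ * (p / x) := by
          apply mul_le_mul_of_nonneg_left this (by positivity)
      _ = p * x ^ (-p - 1) := by
          have h6 : x ^ (-p - 1) = (x ^ p)⁻¹ * x⁻¹ := by
            rw [show -p - 1 = -(p + 1) by ring, Real.rpow_neg hx.le,
              Real.rpow_add hx, Real.rpow_one, mul_inv]
          rw [h6]; field_simp
  linarith

lemma step_ineq (a φ ε e : ℝ) (ha : 0 < a) (hφ : 0 < φ) (hε : 0 < ε)
    (he1 : 1 < e) (he2 : e ≤ 2) (hφa : φ ≥ 2 * (e - 1) / a)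
    {x : ℝ} (hx : 0 < x) :
    (2 / a) * ((ε / x ^ e) / (φ / x)) * (1 - a * (φ / x)) + ε / x ^ e
      ≤ (2 / a) * ((ε / (x + 1) ^ e) / (φ / (x + 1))) := by
  have hx1 : (0:ℝ) < x + 1 := by linarith
  have hC : ∀ y : ℝ, 0 < y →
      (2 / a) * ((ε / y ^ e) / (φ / y)) = (2 * ε / (a * φ)) * y ^ (1 - e) := by
    intro y hy
    rw [Real.rpow_sub hy, Real.rpow_one]
    have := (Real.rpow_pos_of_pos hy e).ne'
    field_simp
  rw [hC x hx, hC (x + 1) hx1]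
  set D := 2 * ε / (a * φ) with hD
  have hD0 : 0 ≤ D := by positivity
  set w := x ^ (-e) with hw
  have hw0 : 0 < w := Real.rpow_pos_of_pos hx _
  have hu : x ^ (1 - e) = w * x := by
    rw [show (1 - e) = -e + 1 by ring, Real.rpow_add_one hx.ne']
  have hεw : ε / x ^ e = ε * w := by
    rw [hw, Real.rpow_neg hx.le, div_eq_mul_inv]
  have hkey : w * x - (x + 1) ^ (1 - e) ≤ (e - 1) * w := by
    have := key e he1 he2 hx
    rw [hu] at this
    linarith
  rw [hu, hεw]
  have haφ : 2 * (e - 1) ≤ a * φ := by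
    rw [ge_iff_le, div_le_iff₀ ha] at hφa
    linarith
  have heq : D * (w * x) * (1 - a * (φ / x)) + ε * w
      = D * (w * x) - 2 * ε * w + ε * w := by
    rw [hD]
    field_simp
  have h1 : D * (w * x - (x + 1) ^ (1 - e)) ≤ D * ((e - 1) * w) :=
    mul_le_mul_of_nonneg_left hkey hD0
  have hcoef : D * (e - 1) ≤ ε := by
    rw [hD, div_mul_eq_mul_div, div_le_iff₀ (by positivity)]
    nlinarith
  have h2 : D * (e - 1) * w ≤ ε * w := mul_le_mul_of_nonneg_right hcoef hw0.le
  nlinarith [h1, h2, heq]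

/-- Let `a, φ, K, ε > 0` and `e ∈ (1,2]`, and set `φ_k = φ/(k+K)`,
`ε_k = ε/(k+K)^e`. If `φ ≥ 2(e−1)/a` and `a·φ_k ≤ 1` for all `k`, then for all
`k ≥ 0`, `Σ_{i=0}^{k−1} ε_i ∏_{j=i+1}^{k−1}(1 − a·φ_j) ≤ (2/a)·(ε_k/φ_k)`
(empty product equals 1, empty sum equals 0). -/
theorem stmt_12 (a φ K ε e : ℝ) (ha : 0 < a) (hφ : 0 < φ) (hK : 0 < K) (hε : 0 < ε)
    (he1 : 1 < e) (he2 : e ≤ 2)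
    (hφa : φ ≥ 2 * (e - 1) / a) (hstep : ∀ k : ℕ, a * (φ / ((k : ℝ) + K)) ≤ 1) :
    ∀ k : ℕ,
      ∑ i ∈ Finset.range k,
          (ε / ((i : ℝ) + K) ^ e) *
            ∏ j ∈ Finset.Ico (i + 1) k, (1 - a * (φ / ((j : ℝ) + K)))
        ≤ (2 / a) * ((ε / ((k : ℝ) + K) ^ e) / (φ / ((k : ℝ) + K))) := by
  intro k
  induction k with
  | zero =>
      simp
      positivity
  | succ k ih =>
      have hx : (0:ℝ) < (k:ℝ) + K := by positivity
      have hg0 : 0 ≤ 1 - a * (φ / ((k:ℝ) + K)) := by linarith [hstep k]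
      -- split products and the last summand
      rw [Finset.sum_range_succ]
      have hsplit : ∀ i ∈ Finset.range k,
          (ε / ((i : ℝ) + K) ^ e) *
              ∏ j ∈ Finset.Ico (i + 1) (k + 1), (1 - a * (φ / ((j : ℝ) + K)))
            = ((ε / ((i : ℝ) + K) ^ e) *
              ∏ j ∈ Finset.Ico (i + 1) k, (1 - a * (φ / ((j : ℝ) + K))))
              * (1 - a * (φ / ((k:ℝ) + K))) := by
        intro i hi
        rw [Finset.prod_Ico_succ_top (Nat.succ_le_of_lt (Finset.mem_range.mp hi))]
        ring
      rw [Finset.sum_congr rfl hsplit, ← Finset.sum_mul, Finset.Ico_self,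
        Finset.prod_empty, mul_one]
      have h1 : (∑ i ∈ Finset.range k, (ε / ((i : ℝ) + K) ^ e) *
            ∏ j ∈ Finset.Ico (i + 1) k, (1 - a * (φ / ((j : ℝ) + K))))
            * (1 - a * (φ / ((k:ℝ) + K)))
          ≤ (2 / a) * ((ε / ((k : ℝ) + K) ^ e) / (φ / ((k : ℝ) + K)))
            * (1 - a * (φ / ((k:ℝ) + K))) :=
        mul_le_mul_of_nonneg_right ih hg0
      have h2 := step_ineq a φ ε e ha hφ hε he1 he2 hφa hx
      have hcast : ((k + 1 : ℕ) : ℝ) + K = ((k : ℝ) + K) + 1 := by push_cast; ring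
      rw [hcast]
      linarith
end

section
/- Let G : ℝ^d → ℝ^d be λ-contractive with λ ∈ [0,1) and fixed point x*, and set λ' = 1 − λ. Fix p ∈ (1,2). For any z, Δ ∈ ℝ^d and any β ∈ (0,1], the point z' = z + β(G(z) − z + Δ) satisfies ‖z' − x*‖^p ≤ (1 − (λ'/2)β)‖z − x*‖^p + (9β/λ')‖Δ‖^p. -/
/-- Let `G : ℝ^d → ℝ^d` be `λ`-contractive with `λ ∈ [0,1)` and fixed point
`x*`, and set `λ' = 1 − λ`. Fix `p ∈ (1,2)`. For any `z, Δ ∈ ℝ^d` and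
`β ∈ (0,1]`, the point `z' = z + β(G(z) − z + Δ)` satisfies
`‖z' − x*‖^p ≤ (1 − (λ'/2)β)‖z − x*‖^p + (9β/λ')‖Δ‖^p`. -/
theorem stmt_18 {d : ℕ} (G : EuclideanSpace ℝ (Fin d) → EuclideanSpace ℝ (Fin d))
    (lam : ℝ) (hlam0 : 0 ≤ lam) (hlam1 : lam < 1)
    (hG : ∀ x y, ‖G x - G y‖ ≤ lam * ‖x - y‖)
    (xstar : EuclideanSpace ℝ (Fin d)) (hstar : G xstar = xstar)
    (p : ℝ) (hp1 : 1 < p) (hp2 : p < 2)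
    (z Δ : EuclideanSpace ℝ (Fin d)) (β : ℝ) (hβ0 : 0 < β) (hβ1 : β ≤ 1) :
    ‖z + β • (G z - z + Δ) - xstar‖ ^ p
      ≤ (1 - ((1 - lam) / 2) * β) * ‖z - xstar‖ ^ p
        + (9 * β / (1 - lam)) * ‖Δ‖ ^ p := by
  set lam' : ℝ := 1 - lam with hlam'
  have hl0 : 0 < lam' := by rw [hlam']; linarith
  have hl1 : lam' ≤ 1 := by rw [hlam']; linarith
  set r := ‖z - xstar‖ with hr
  set δ := ‖Δ‖ with hδ
  clear_value lam' r δ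
  have hr0 : 0 ≤ r := hr ▸ norm_nonneg _
  have hδ0 : 0 ≤ δ := hδ ▸ norm_nonneg _
  have hw1 : 0 ≤ 1 - lam' * β := by nlinarith
  have hw2 : 0 ≤ lam' * β := by positivity
  have h1 : ‖z + β • (G z - z + Δ) - xstar‖ ≤ (1 - lam' * β) * r + lam' * β * (δ / lam') := by
    rw [hr, hδ]
    have heq : z + β • (G z - z + Δ) - xstar
        = ((1 - β) • (z - xstar) + β • (G z - G xstar)) + β • Δ := by
      rw [hstar]; module
    calc ‖z + β • (G z - z + Δ) - xstar‖
        ≤ ‖(1 - β) • (z - xstar) + β • (G z - G xstar)‖ + ‖β • Δ‖ := by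
          rw [heq]; exact norm_add_le _ _
      _ ≤ ‖(1 - β) • (z - xstar)‖ + ‖β • (G z - G xstar)‖ + ‖β • Δ‖ := by
          gcongr; exact norm_add_le _ _
      _ ≤ (1 - β) * ‖z - xstar‖ + β * (lam * ‖z - xstar‖) + β * ‖Δ‖ := by
          rw [norm_smul, norm_smul, norm_smul]
          rw [Real.norm_eq_abs, Real.norm_eq_abs,
            abs_of_nonneg (le_of_lt hβ0), abs_of_nonneg (by linarith : (0:ℝ) ≤ 1 - β)]
          gcongr
          exact hG z xstar
      _ = (1 - lam' * β) * ‖z - xstar‖ + lam' * β * (‖Δ‖ / lam') := by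
          have hne : lam' ≠ 0 := ne_of_gt hl0
          rw [mul_comm lam' β, mul_assoc, mul_div_cancel₀ _ hne, hlam']; ring
  have hp1' : (1:ℝ) ≤ p := le_of_lt hp1
  have hconv := (convexOn_rpow hp1').2 (Set.mem_Ici.mpr hr0)
      (Set.mem_Ici.mpr (by positivity : (0:ℝ) ≤ δ / lam')) hw1 hw2 (by ring)
  have h2 : ‖z + β • (G z - z + Δ) - xstar‖ ^ p
      ≤ (1 - lam' * β) * r ^ p + lam' * β * (δ / lam') ^ p := by
    calc ‖z + β • (G z - z + Δ) - xstar‖ ^ p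
        ≤ ((1 - lam' * β) * r + lam' * β * (δ / lam')) ^ p :=
          Real.rpow_le_rpow (norm_nonneg _) h1 (by linarith)
      _ ≤ _ := by simpa [smul_eq_mul] using hconv
  refine h2.trans ?_
  have hrp0 : 0 ≤ r ^ p := Real.rpow_nonneg hr0 p
  have hδp0 : 0 ≤ δ ^ p := Real.rpow_nonneg hδ0 p
  have hlp0 : 0 < lam' ^ p := Real.rpow_pos_of_pos hl0 p
  have hexp : lam' ^ (2:ℝ) ≤ lam' ^ p :=
    Real.rpow_le_rpow_of_exponent_ge hl0 hl1 (le_of_lt hp2)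
  have hl2 : lam' * lam' ≤ lam' ^ p := by
    have h22 : lam' ^ (2:ℝ) = lam' * lam' := by
      rw [show (2:ℝ) = ((2:ℕ):ℝ) by norm_num, Real.rpow_natCast]; ring
    rw [h22] at hexp; exact hexp
  have hterm1 : (1 - lam' * β) * r ^ p ≤ (1 - lam' / 2 * β) * r ^ p := by
    apply mul_le_mul_of_nonneg_right _ hrp0
    nlinarith
  have hterm2 : lam' * β * (δ / lam') ^ p ≤ 9 * β / lam' * δ ^ p := by
    rw [Real.div_rpow hδ0 hl0.le]
    have key : lam' / lam' ^ p ≤ 9 / lam' := by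
      rw [div_le_div_iff₀ hlp0 hl0]
      calc lam' * lam' ≤ lam' ^ p := hl2
        _ ≤ 9 * lam' ^ p := by linarith
    calc lam' * β * (δ ^ p / lam' ^ p) = β * δ ^ p * (lam' / lam' ^ p) := by ring
      _ ≤ β * δ ^ p * (9 / lam') := by
          exact mul_le_mul_of_nonneg_left key (by positivity)
      _ = 9 * β / lam' * δ ^ p := by ring
  calc (1 - lam' * β) * r ^ p + lam' * β * (δ / lam') ^ p
      ≤ (1 - lam' / 2 * β) * r ^ p + 9 * β / lam' * δ ^ p := add_le_add hterm1 hterm2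
    _ = (1 - lam' / 2 * β) * r ^ p + 9 * β / lam' * δ ^ p := rfl
end

section
/- Let G : ℝ^d → ℝ^d be λ-contractive with λ ∈ [0,1) and fixed point x*, and set λ' = 1 − λ. For any z, Δ ∈ ℝ^d and any β ∈ (0,1], the point z' = z + β(G(z) − z + Δ) satisfies ‖z' − x*‖² ≤ (1 − (λ'/2)β)‖z − x*‖² + (3/λ')β‖Δ‖². -/
/-- Let `G : ℝ^d → ℝ^d` be `λ`-contractive with `λ ∈ [0,1)` and fixed point
`x*`, and set `λ' = 1 − λ`. For any `z, Δ ∈ ℝ^d` and `β ∈ (0,1]`, the point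
`z' = z + β(G(z) − z + Δ)` satisfies
`‖z' − x*‖² ≤ (1 − (λ'/2)β)‖z − x*‖² + (3/λ')β‖Δ‖²`. -/
theorem stmt_19 {d : ℕ} (G : EuclideanSpace ℝ (Fin d) → EuclideanSpace ℝ (Fin d))
    (lam : ℝ) (hlam0 : 0 ≤ lam) (hlam1 : lam < 1)
    (hG : ∀ x y, ‖G x - G y‖ ≤ lam * ‖x - y‖)
    (xstar : EuclideanSpace ℝ (Fin d)) (hstar : G xstar = xstar)
    (z Δ : EuclideanSpace ℝ (Fin d)) (β : ℝ) (hβ0 : 0 < β) (hβ1 : β ≤ 1) :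
    ‖z + β • (G z - z + Δ) - xstar‖ ^ 2
      ≤ (1 - ((1 - lam) / 2) * β) * ‖z - xstar‖ ^ 2
        + (3 / (1 - lam)) * β * ‖Δ‖ ^ 2 := by
  have hl : (0:ℝ) < 1 - lam := by linarith
  set A := ‖z - xstar‖ with hA
  set B := ‖Δ‖ with hB
  set N := ‖z + β • (G z - z + Δ) - xstar‖ with hN
  have hA0 : 0 ≤ A := norm_nonneg _
  have hB0 : 0 ≤ B := norm_nonneg _
  have hN0 : 0 ≤ N := norm_nonneg _
  have hdecomp : z + β • (G z - z + Δ) - xstar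
      = ((1 - β) • (z - xstar) + β • (G z - G xstar)) + β • Δ := by
    rw [hstar]; module
  have hkey : N ≤ (1 - β * (1 - lam)) * A + β * B := by
    rw [hN, hdecomp]
    calc ‖((1 - β) • (z - xstar) + β • (G z - G xstar)) + β • Δ‖
        ≤ ‖(1 - β) • (z - xstar) + β • (G z - G xstar)‖ + ‖β • Δ‖ := norm_add_le _ _
      _ ≤ (‖(1 - β) • (z - xstar)‖ + ‖β • (G z - G xstar)‖) + ‖β • Δ‖ := by
          gcongr; exact norm_add_le _ _
      _ ≤ (1 - β * (1 - lam)) * A + β * B := by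
          simp only [norm_smul, Real.norm_eq_abs,
            abs_of_nonneg (by linarith : (0:ℝ) ≤ 1 - β), abs_of_nonneg hβ0.le]
          nlinarith [hG z xstar]
  have hcoef : 0 ≤ 1 - β * (1 - lam) := by nlinarith
  have hN2 : N ^ 2 ≤ ((1 - β * (1 - lam)) * A + β * B) ^ 2 := by
    exact pow_le_pow_left₀ hN0 hkey 2
  have main : (1 - lam) * N ^ 2
      ≤ (1 - lam) * ((1 - (1 - lam) / 2 * β) * A ^ 2) + 3 * β * B ^ 2 := by
    nlinarith [mul_nonneg (mul_nonneg hβ0.le hcoef) (sq_nonneg ((1 - lam) * A - B)),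
      mul_nonneg (mul_nonneg hl.le hβ0.le) (sq_nonneg A),
      mul_nonneg hβ0.le (sq_nonneg B),
      mul_nonneg (mul_nonneg hβ0.le hβ0.le) (mul_nonneg hl.le (sq_nonneg A)),
      mul_nonneg hβ0.le (mul_nonneg hl.le (sq_nonneg B))]
  calc N ^ 2 = (1 - lam) * N ^ 2 / (1 - lam) := by field_simp
    _ ≤ ((1 - lam) * ((1 - (1 - lam) / 2 * β) * A ^ 2) + 3 * β * B ^ 2) / (1 - lam) := by
        gcongr
    _ = (1 - (1 - lam) / 2 * β) * A ^ 2 + 3 / (1 - lam) * β * B ^ 2 := by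
        field_simp
end
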